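/- Let γ < 0, μ, a₁, a₂ be real constants, set α = −1, β = −2, a₃ = √(−γ/2), κ = a₁²·(1 + 2γμ) and a₄ = −(2a₂ + 3a₁²·μ)/3. Then the function u(x,t) = a₂·(sech(a₃·(x − a₁·t)))² + a₄ solves equation (1) at every point (x,t) ∈ ℝ². -/

import Mathlib

/-!
The wave is travelling, `u = w (x - a₁ t)` with `w = a₂ sech² (c ·) + a₄` and `c² = -γ/2`, so
equation (1) becomes an ODE for `w`. For `α = -1`, `β = -2` this ODE is an exact second
derivative, because `w w'''' - w' w''' - 2 w''² = (w w'' - 3/2 w'²)''`. Writing `S = sech² (c ·)`,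
one has `w'' = a₂ c² (4 S - 6 S²)` and `w'² = 4 a₂² c² S² (1 - S)`, so the twice integrated
equation is a polynomial in `S`: its cubic terms cancel, and its linear and quadratic
coefficients vanish precisely for the given `κ` and `a₄`.
-/

/-- `u` solves equation (1), the nonlinear fourth order PDE
`u_tt = (κ u + γ u²)_xx + u u_xxxx + μ u_xxtt + α u_x u_xxx + β (u_xx)²`,
at the point `(x, t)`. -/
noncomputable def SolvesEq1 (α β γ κ μ : ℝ) (u : ℝ → ℝ → ℝ) (x t : ℝ) : Prop :=
  iteratedDeriv 2 (fun s => u x s) t =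
    iteratedDeriv 2 (fun y => κ * u y t + γ * (u y t) ^ 2) x
    + u x t * iteratedDeriv 4 (fun y => u y t) x
    + μ * iteratedDeriv 2 (fun y => iteratedDeriv 2 (fun s => u y s) t) x
    + α * deriv (fun y => u y t) x * iteratedDeriv 3 (fun y => u y t) x
    + β * (iteratedDeriv 2 (fun y => u y t) x) ^ 2

open Real

section IteratedDeriv

variable {𝕜 F : Type*} [NontriviallyNormedField 𝕜] [NormedAddCommGroup F] [NormedSpace 𝕜 F]

lemma deriv_comp_const_sub_mul (f : 𝕜 → F) (x v s : 𝕜) :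
    deriv (fun s => f (x - v * s)) s = -v • deriv f (x - v * s) := by
  rw [deriv_comp_mul_left v (fun z => f (x - z)) s, deriv_comp_const_sub, smul_neg, neg_smul]

lemma iteratedDeriv_comp_const_sub_mul (f : 𝕜 → F) (x v : 𝕜) (n : ℕ) :
    iteratedDeriv n (fun s => f (x - v * s)) =
      fun s => (-v) ^ n • iteratedDeriv n f (x - v * s) := by
  induction n with
  | zero => simp
  | succ n ih =>
    funext s
    rw [iteratedDeriv_succ, ih, deriv_fun_const_smul_field, deriv_comp_const_sub_mul,
      iteratedDeriv_succ, smul_smul, pow_succ]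

lemma iteratedDeriv_iteratedDeriv (m n : ℕ) (f : 𝕜 → F) :
    iteratedDeriv m (iteratedDeriv n f) = iteratedDeriv (m + n) f := by
  simp only [iteratedDeriv_eq_iterate, Function.iterate_add, Function.comp_apply]

lemma hasDerivAt_iteratedDeriv {n : ℕ} {f : 𝕜 → F} (hf : ContDiff 𝕜 n f) {k : ℕ} (hk : k < n)
    (z : 𝕜) : HasDerivAt (iteratedDeriv k f) (iteratedDeriv (k + 1) f z) z := by
  rw [iteratedDeriv_succ]
  exact (hf.differentiable_iteratedDeriv k (by exact_mod_cast hk) z).hasDerivAt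

lemma iteratedDeriv_two_eq_of_hasDerivAt {f f' f'' : 𝕜 → F} (hf : ∀ y, HasDerivAt f (f' y) y)
    (hf' : ∀ y, HasDerivAt f' (f'' y) y) (z : 𝕜) : iteratedDeriv 2 f z = f'' z := by
  rw [iteratedDeriv_succ, iteratedDeriv_one, funext fun y => (hf y).deriv]
  exact (hf' z).deriv

end IteratedDeriv

theorem solvesEq1_travelingWave_iff (α β γ κ μ v : ℝ) (w : ℝ → ℝ) (x t : ℝ) :
    SolvesEq1 α β γ κ μ (fun x t => w (x - v * t)) x t ↔
      v ^ 2 * iteratedDeriv 2 w (x - v * t) =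
        iteratedDeriv 2 (fun z => κ * w z + γ * w z ^ 2) (x - v * t)
        + w (x - v * t) * iteratedDeriv 4 w (x - v * t)
        + μ * v ^ 2 * iteratedDeriv 4 w (x - v * t)
        + α * deriv w (x - v * t) * iteratedDeriv 3 w (x - v * t)
        + β * iteratedDeriv 2 w (x - v * t) ^ 2 := by
  have hx (n : ℕ) (f : ℝ → ℝ) :
      iteratedDeriv n (fun y => f (y - v * t)) x = iteratedDeriv n f (x - v * t) :=
    congrFun (iteratedDeriv_comp_sub_const n f (v * t)) x
  have hxt : iteratedDeriv 2 (fun y => iteratedDeriv 2 (fun s => w (y - v * s)) t) x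
      = v ^ 2 * iteratedDeriv 4 w (x - v * t) := by
    simp only [iteratedDeriv_comp_const_sub_mul, smul_eq_mul, iteratedDeriv_const_mul_field]
    rw [hx, iteratedDeriv_iteratedDeriv, neg_sq]
  have htt :
      iteratedDeriv 2 (fun s => w (x - v * s)) t = v ^ 2 * iteratedDeriv 2 w (x - v * t) := by
    simp only [iteratedDeriv_comp_const_sub_mul, smul_eq_mul, neg_sq]
  dsimp only [SolvesEq1]
  rw [htt, hxt, hx 2 (fun z => κ * w z + γ * w z ^ 2), hx 4, hx 3,
    hx 2, deriv_comp_sub_const, mul_assoc μ]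

noncomputable def travelingWaveFirstIntegral (κ γ μ v : ℝ) (w : ℝ → ℝ) (z : ℝ) : ℝ :=
  v ^ 2 * w z - (κ * w z + γ * w z ^ 2) - μ * v ^ 2 * iteratedDeriv 2 w z
    - (w z * iteratedDeriv 2 w z - 3 / 2 * deriv w z ^ 2)

section Profile

variable {w : ℝ → ℝ}

lemma iteratedDeriv_two_mul_iteratedDeriv_two_sub_sq (hw : ContDiff ℝ 4 w) (z : ℝ) :
    iteratedDeriv 2 (fun z => w z * iteratedDeriv 2 w z - 3 / 2 * deriv w z ^ 2) z
      = w z * iteratedDeriv 4 w z - deriv w z * iteratedDeriv 3 w z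
        - 2 * iteratedDeriv 2 w z ^ 2 := by
  have h0 (y : ℝ) : HasDerivAt w (deriv w y) y := (hw.differentiable (by norm_num) y).hasDerivAt
  have h1 (y : ℝ) : HasDerivAt (deriv w) (iteratedDeriv 2 w y) y := by
    simpa using hasDerivAt_iteratedDeriv hw (k := 1) (by norm_num) y
  have h2 (y : ℝ) : HasDerivAt (iteratedDeriv 2 w) (iteratedDeriv 3 w y) y :=
    hasDerivAt_iteratedDeriv hw (by norm_num) y
  have h3 (y : ℝ) : HasDerivAt (iteratedDeriv 3 w) (iteratedDeriv 4 w y) y :=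
    hasDerivAt_iteratedDeriv hw (by norm_num) y
  apply iteratedDeriv_two_eq_of_hasDerivAt
    (f' := fun z => w z * iteratedDeriv 3 w z - 2 * deriv w z * iteratedDeriv 2 w z) <;> intro y
  · exact (((h0 y).fun_mul (h2 y)).fun_sub (((h1 y).fun_pow 2).const_mul (3 / 2))).congr_deriv
      (by ring)
  · exact (((h0 y).fun_mul (h3 y)).fun_sub (((h1 y).const_mul 2).fun_mul (h2 y))).congr_deriv
      (by ring)

theorem travelingWave_ode_of_firstIntegral_eq_const {κ γ μ v C : ℝ}
    (hw : ContDiff ℝ 4 w) (hC : ∀ z, travelingWaveFirstIntegral κ γ μ v w z = C) (ξ : ℝ) :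
    v ^ 2 * iteratedDeriv 2 w ξ =
      iteratedDeriv 2 (fun z => κ * w z + γ * w z ^ 2) ξ
      + w ξ * iteratedDeriv 4 w ξ
      + μ * v ^ 2 * iteratedDeriv 4 w ξ
      + (-1) * deriv w ξ * iteratedDeriv 3 w ξ
      + (-2) * iteratedDeriv 2 w ξ ^ 2 := by
  have hw₀ : ContDiff ℝ 2 w := hw.of_le (by norm_num)
  have hw₁ : ContDiff ℝ 2 (deriv w) := (hw.deriv' (n := 3)).of_le (by norm_num)
  have hw₂ : ContDiff ℝ 2 (iteratedDeriv 2 w) := by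
    rw [iteratedDeriv_succ, iteratedDeriv_one]
    exact (hw.deriv' (n := 3)).deriv'
  have hE : iteratedDeriv 2 (travelingWaveFirstIntegral κ γ μ v w) ξ = 0 := by
    simp [funext hC, iteratedDeriv_const]
  unfold travelingWaveFirstIntegral at hE
  rw [iteratedDeriv_fun_sub (by fun_prop) (by fun_prop),
    iteratedDeriv_fun_sub (by fun_prop) (by fun_prop),
    iteratedDeriv_fun_sub (by fun_prop) (by fun_prop),
    iteratedDeriv_const_mul_field, iteratedDeriv_const_mul_field,
    iteratedDeriv_iteratedDeriv, show 2 + 2 = 4 from rfl,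
    iteratedDeriv_two_mul_iteratedDeriv_two_sub_sq hw] at hE
  linear_combination hE

end Profile

lemma tanh_sq_add_one_div_cosh_sq (y : ℝ) : tanh y ^ 2 + (1 / cosh y) ^ 2 = 1 := by
  have hcosh := (cosh_pos y).ne'
  rw [tanh_eq_sinh_div_cosh]
  field_simp
  linarith [cosh_sq y]

lemma hasDerivAt_tanh_mul (c z : ℝ) :
    HasDerivAt (fun z => tanh (c * z)) (c * (1 / cosh (c * z)) ^ 2) z := by
  have hlin : HasDerivAt (fun z => c * z) c z := by simpa using (hasDerivAt_id z).const_mul c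
  have hcosh := (cosh_pos (c * z)).ne'
  simp only [tanh_eq_sinh_div_cosh]
  refine (hlin.sinh.div hlin.cosh hcosh).congr_deriv ?_
  field_simp
  linear_combination c * cosh_sq (c * z)

lemma hasDerivAt_one_div_cosh_mul_sq (c z : ℝ) :
    HasDerivAt (fun z => (1 / cosh (c * z)) ^ 2)
      (-2 * c * tanh (c * z) * (1 / cosh (c * z)) ^ 2) z := by
  have hlin : HasDerivAt (fun z => c * z) c z := by simpa using (hasDerivAt_id z).const_mul c
  have hcosh := (cosh_pos (c * z)).ne'
  simp only [one_div, inv_pow]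
  refine ((hlin.cosh.fun_pow 2).inv (pow_ne_zero 2 hcosh)).congr_deriv ?_
  rw [tanh_eq_sinh_div_cosh]
  field_simp
  ring

noncomputable def sechSqWave (a c b z : ℝ) : ℝ := a * (1 / cosh (c * z)) ^ 2 + b

section sechSqWave

variable {a c b : ℝ}

lemma hasDerivAt_sechSqWave (z : ℝ) : HasDerivAt (sechSqWave a c b)
    (-2 * a * c * tanh (c * z) * (1 / cosh (c * z)) ^ 2) z := by
  refine (((hasDerivAt_one_div_cosh_mul_sq c z).const_mul a).add_const b).congr_deriv ?_
  ring

lemma hasDerivAt_deriv_sechSqWave (z : ℝ) :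
    HasDerivAt (fun z => -2 * a * c * tanh (c * z) * (1 / cosh (c * z)) ^ 2)
      (a * c ^ 2 * (4 * (1 / cosh (c * z)) ^ 2 - 6 * (1 / cosh (c * z)) ^ 4)) z := by
  refine (((hasDerivAt_tanh_mul c z).const_mul (-2 * a * c)).fun_mul
    (hasDerivAt_one_div_cosh_mul_sq c z)).congr_deriv ?_
  linear_combination 4 * a * c ^ 2 * (1 / cosh (c * z)) ^ 2 * tanh_sq_add_one_div_cosh_sq (c * z)

lemma contDiff_sechSqWave (n : WithTop ℕ∞) : ContDiff ℝ n (sechSqWave a c b) := by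
  unfold sechSqWave
  fun_prop (disch := exact fun z => (cosh_pos _).ne')

theorem travelingWaveFirstIntegral_sechSqWave {γ κ μ v : ℝ} (hγ : γ = -2 * c ^ 2)
    (hκ : κ = v ^ 2 * (1 + 2 * γ * μ)) (hb : b = -(2 * a + 3 * v ^ 2 * μ) / 3) (z : ℝ) :
    travelingWaveFirstIntegral κ γ μ v (sechSqWave a c b) z = b * (v ^ 2 - κ - γ * b) := by
  have hd := (hasDerivAt_sechSqWave (a := a) (c := c) (b := b) z).deriv
  have hdd : iteratedDeriv 2 (sechSqWave a c b) z = _ :=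
    iteratedDeriv_two_eq_of_hasDerivAt hasDerivAt_sechSqWave hasDerivAt_deriv_sechSqWave z
  rw [travelingWaveFirstIntegral, hd, hdd]
  unfold sechSqWave
  subst hγ hκ hb
  linear_combination
    6 * a ^ 2 * c ^ 2 * (1 / cosh (c * z)) ^ 4 * tanh_sq_add_one_div_cosh_sq (c * z)

end sechSqWave

theorem sech_squared_soliton_solves_eq1 (γ μ a₁ a₂ : ℝ) (hγ : γ < 0) :
    ∀ x t : ℝ,
      SolvesEq1 (-1) (-2) γ (a₁ ^ 2 * (1 + 2 * γ * μ)) μ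
        (fun x t =>
          a₂ * (1 / Real.cosh (Real.sqrt (-γ / 2) * (x - a₁ * t))) ^ 2
            + (-(2 * a₂ + 3 * a₁ ^ 2 * μ) / 3)) x t := by
  intro x t
  have hc : γ = -2 * √(-γ / 2) ^ 2 := by
    rw [sq_sqrt (by linarith)]
    ring
  exact (solvesEq1_travelingWave_iff _ _ _ _ _ a₁ (sechSqWave a₂ √(-γ / 2) _) x t).2
    (travelingWave_ode_of_firstIntegral_eq_const (contDiff_sechSqWave 4)
      (travelingWaveFirstIntegral_sechSqWave hc rfl rfl) _)
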